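/- Let p, q, r ≥ 2 be integers, set n := p + q + r − 4, and let L, M, N be pairwise disjoint finite sets of nonnegative integers with |L| = r−2, |M| = p−2, |N| = q−2. Writing S+1 := {s+1 : s ∈ S}, one has (−1)^{nr} · sgn(L+1, {0} ∪ ((M ∪ N)+1)) = (−1)^{pr} · sgn(N,L) · sgn(L,M). -/

import Mathlib

/-!
Shifting `L` up by one and putting `0` below everything adds exactly one inversion per element
of `L`, so the left-hand sign is `(-1)^|L| sgn(L,M) sgn(L,N)`. Swapping disjoint sets multiplies
the sign by `(-1)^(|L||N|)`, so `sgn(N,L) = (-1)^(|L||N|) sgn(L,N)`, and the identity reduces to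
the parity `nr + (r-2) ≡ pr + (r-2)(q-2) (mod 2)`, i.e. to `r(r-1)` being even.
-/

/-- The sign `sgn(I,J)` of a pair of finite sets of nonnegative integers:
`sgn(I,J) = (-1)^m` where `m` is the number of pairs `(i,j) ∈ (I∖J) × (J∖I)` with
`i > j`.  For disjoint `I` and `J` this is the sign of the permutation of
`|I| + |J|` letters rearranging the concatenation of the increasing enumerations of
`I` and `J` into the increasing enumeration of `I ∪ J`, and in general
`sgn(I,J) = sgn(I∖J, J∖I)`. -/
def sgnSet (I J : Finset ℕ) : ℤ :=
  (-1) ^ (((I \ J) ×ˢ (J \ I)).filter fun p => p.2 < p.1).card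

open Finset

def invCount (A B : Finset ℕ) : ℕ := #((A ×ˢ B).filter fun x => x.2 < x.1)

lemma invCount_eq_sum (A B : Finset ℕ) :
    invCount A B = ∑ a ∈ A, #(B.filter (· < a)) := by
  rw [invCount, card_filter, sum_product]
  simp only [card_filter]

lemma sgnSet_of_disjoint {I J : Finset ℕ} (h : Disjoint I J) :
    sgnSet I J = (-1) ^ invCount I J := by
  rw [sgnSet, invCount, sdiff_eq_self_of_disjoint h, sdiff_eq_self_of_disjoint h.symm]

lemma invCount_add_invCount_swap {A B : Finset ℕ} (h : Disjoint A B) :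
    invCount A B + invCount B A = #A * #B := by
  have hswap : invCount B A = #((A ×ˢ B).filter fun x => ¬ x.2 < x.1) := by
    rw [invCount, ← map_swap_product, filter_map, card_map]
    congr 1
    refine filter_congr fun x hx => ?_
    obtain ⟨ha, hb⟩ := mem_product.mp hx
    have hne : x.1 ≠ x.2 := fun e => disjoint_left.mp h ha (e ▸ hb)
    simp only [Function.comp, Function.Embedding.coeFn_mk, Prod.fst_swap, Prod.snd_swap]
    omega
  rw [hswap, invCount, card_filter_add_card_filter_not, card_product]

lemma sgnSet_swap {I J : Finset ℕ} (h : Disjoint I J) :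
    sgnSet J I = (-1) ^ (#I * #J) * sgnSet I J := by
  rw [sgnSet_of_disjoint h, sgnSet_of_disjoint h.symm, ← invCount_add_invCount_swap h, pow_add,
    mul_right_comm, ← pow_add, Even.neg_one_pow ⟨_, rfl⟩, one_mul]

lemma invCount_union_right (A : Finset ℕ) {B C : Finset ℕ} (h : Disjoint B C) :
    invCount A (B ∪ C) = invCount A B + invCount A C := by
  simp only [invCount_eq_sum, filter_union, card_union_of_disjoint (disjoint_filter_filter h),
    sum_add_distrib]

lemma sgnSet_union_right {A B C : Finset ℕ} (hAB : Disjoint A B) (hAC : Disjoint A C)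
    (hBC : Disjoint B C) : sgnSet A (B ∪ C) = sgnSet A B * sgnSet A C := by
  rw [sgnSet_of_disjoint (disjoint_union_right.mpr ⟨hAB, hAC⟩), invCount_union_right A hBC,
    pow_add, sgnSet_of_disjoint hAB, sgnSet_of_disjoint hAC]

lemma invCount_shift_insert_zero (A B : Finset ℕ) :
    invCount (A.image (· + 1)) (insert 0 (B.image (· + 1))) = #A + invCount A B := by
  have hcount : ∀ a : ℕ, #((insert 0 (B.image (· + 1))).filter (· < a + 1)) =
      1 + #(B.filter (· < a)) := by
    intro a
    rw [filter_insert, if_pos a.succ_pos, card_insert_of_notMem (by simp), add_comm, filter_image,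
      card_image_of_injective _ (add_left_injective 1)]
    simp only [add_lt_add_iff_right]
  rw [invCount_eq_sum, sum_image (by simp), sum_congr rfl fun a _ => hcount a, sum_add_distrib,
    invCount_eq_sum, sum_const, smul_eq_mul, mul_one]

lemma sgnSet_shift_insert_zero {A B : Finset ℕ} (h : Disjoint A B) :
    sgnSet (A.image (· + 1)) (insert 0 (B.image (· + 1))) = (-1) ^ #A * sgnSet A B := by
  have hshift : Disjoint (A.image (· + 1)) (insert 0 (B.image (· + 1))) := by
    rw [disjoint_insert_right, disjoint_image (add_left_injective 1)]
    exact ⟨by simp, h⟩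
  rw [sgnSet_of_disjoint hshift, invCount_shift_insert_zero, pow_add, sgnSet_of_disjoint h]

theorem sgnSet_hat_identity_general (p q r n : ℕ) (hq : 2 ≤ q) (hr : 2 ≤ r)
    (hn : n = p + q + r - 4) (L M N : Finset ℕ)
    (hLM : Disjoint L M) (hLN : Disjoint L N) (hMN : Disjoint M N)
    (hL : L.card = r - 2) (hN : N.card = q - 2) :
    (-1 : ℤ) ^ (n * r) *
        sgnSet (L.image (· + 1)) (insert 0 ((M ∪ N).image (· + 1))) =
      (-1 : ℤ) ^ (p * r) * sgnSet N L * sgnSet L M := by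
  have hsign : (-1 : ℤ) ^ (n * r + (r - 2)) = (-1) ^ (p * r + (r - 2) * (q - 2)) := by
    obtain ⟨q, rfl⟩ := Nat.exists_eq_add_of_le' hq
    obtain ⟨r, rfl⟩ := Nat.exists_eq_add_of_le' hr
    obtain rfl : n = p + q + r := by omega
    have hexp : (p + q + r) * (r + 2) + r =
        p * (r + 2) + r * q + 2 * (q + r) + r * (r + 1) := by ring
    rw [Nat.add_sub_cancel, Nat.add_sub_cancel, hexp, pow_add,
      (Nat.even_mul_succ_self r).neg_one_pow, mul_one, pow_add, (even_two_mul _).neg_one_pow,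
      mul_one]
  rw [sgnSet_shift_insert_zero (disjoint_union_right.mpr ⟨hLM, hLN⟩),
    sgnSet_union_right hLM hLN hMN, sgnSet_swap hLN, hL, hN]
  rw [pow_add, pow_add] at hsign
  linear_combination sgnSet L M * sgnSet L N * hsign

/-- Let `p, q, r ≥ 2`, set `n := p + q + r - 4`, and let `L, M, N` be pairwise disjoint
finite sets of nonnegative integers with `|L| = r-2`, `|M| = p-2`, `|N| = q-2`.
Writing `S + 1` for the shift `{s + 1 : s ∈ S}`, one has
`(-1)^{nr} ⬝ sgn(L+1, {0} ∪ ((M ∪ N)+1)) = (-1)^{pr} ⬝ sgn(N,L) ⬝ sgn(L,M)`. -/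
theorem sgnSet_hat_identity (p q r n : ℕ) (hp : 2 ≤ p) (hq : 2 ≤ q) (hr : 2 ≤ r)
    (hn : n = p + q + r - 4) (L M N : Finset ℕ)
    (hLM : Disjoint L M) (hLN : Disjoint L N) (hMN : Disjoint M N)
    (hL : L.card = r - 2) (hM : M.card = p - 2) (hN : N.card = q - 2) :
    (-1 : ℤ) ^ (n * r) *
        sgnSet (L.image (· + 1)) (insert 0 ((M ∪ N).image (· + 1))) =
      (-1 : ℤ) ^ (p * r) * sgnSet N L * sgnSet L M :=
  sgnSet_hat_identity_general p q r n hq hr hn L M N hLM hLN hMN hL hN
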